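/- arXiv:2006.04398 — 6 statements merged into one kernel-verified Lean document; each statement's English description precedes it below -/
import Mathlib

section
/- Let G be a group with center Z(G), and let G_* be a strongly central filtration on G (i.e. G = G_1 ⊇ G_2 ⊇ ⋯ are subgroups with [G_i, G_j] ⊆ G_{i+j} for all i, j ≥ 1, where [g,x] = gxg⁻¹x⁻¹). Then the following two conditions are equivalent: (1) for every j ≥ 1 and every g ∈ G, one has ((for all i ≥ 1 and all x ∈ G_i, [g,x] ∈ G_{i+j}) if and only if there exists z ∈ Z(G) with g·z ∈ G_j); (2) for every i ≥ 1 and every g ∈ G_i such that for all k ≥ 1 and all x ∈ G_k one has [g,x] ∈ G_{i+k+1}, there exists z ∈ Z(G) ∩ G_i with g⁻¹·z ∈ G_{i+1}. -/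
open scoped commutatorElement

/-!
For (1) ⇒ (2), apply (1) with `j = i + 1`. For (2) ⇒ (1), the easy implication of (1) follows
from strong centrality; for the other one, if `c_g` shifts the filtration by `j`, correct `g` by
central elements one filtration step at a time: whenever `g z ∈ G_n` with `n < j`, the class of
`g z` is central in the graded Lie ring, so (2) gives a central `z'` with `g z z'⁻¹ ∈ G_{n+1}`.
-/

theorem commutatorElement_mul_of_mem_center {G : Type*} [Group G] {z : G}
    (hz : z ∈ Subgroup.center G) (g x : G) : ⁅g * z, x⁆ = ⁅g, x⁆ := by
  have hzx : z * x * z⁻¹ = x := by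
    rw [← Subgroup.mem_center_iff.mp hz x, mul_inv_cancel_right]
  calc ⁅g * z, x⁆ = g * (z * x * z⁻¹) * g⁻¹ * x⁻¹ := by group
    _ = ⁅g, x⁆ := by rw [hzx, commutatorElement_def]

namespace Subgroup

variable {G : Type*} [Group G] (Gf : ℕ → Subgroup G)

/-- The inner automorphism `c_g` lies in the `j`-th term of the Andreadakis filtration of `Gf`. -/
def InnerShifts (g : G) (j : ℕ) : Prop :=
  ∀ i, 1 ≤ i → ∀ x ∈ Gf i, ⁅g, x⁆ ∈ Gf (i + j)

def IsCentralMod (g : G) (j : ℕ) : Prop :=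
  ∃ z ∈ center G, g * z ∈ Gf j

variable {Gf}

theorem innerShifts_mul_of_mem_center {g z : G} (hz : z ∈ center G) {j : ℕ} :
    InnerShifts Gf (g * z) j ↔ InnerShifts Gf g j := by
  simp only [InnerShifts, commutatorElement_mul_of_mem_center hz]

theorem InnerShifts.mono (hdesc : ∀ i, 1 ≤ i → Gf (i + 1) ≤ Gf i) {g : G} {j m : ℕ}
    (hg : InnerShifts Gf g j) (hmj : m ≤ j) : InnerShifts Gf g m := fun i hi x hx =>
  antitoneOn_nat_Ici_of_succ_le hdesc (show 1 ≤ i + m by omega) (show 1 ≤ i + j by omega)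
    (by omega) (hg i hi x hx)

theorem innerShifts_of_isCentralMod
    (hsc : ∀ i j, 1 ≤ i → 1 ≤ j → ∀ g ∈ Gf i, ∀ x ∈ Gf j, ⁅g, x⁆ ∈ Gf (i + j))
    {g : G} {j : ℕ} (hj : 1 ≤ j) (hg : IsCentralMod Gf g j) : InnerShifts Gf g j := by
  obtain ⟨z, hz, hgz⟩ := hg
  rw [← innerShifts_mul_of_mem_center hz]
  intro i hi x hx
  rw [add_comm]
  exact hsc j i hj hi _ hgz x hx

/-- Condition (2): every central element of the graded Lie ring of `Gf` lifts to the centre. -/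
def CentralClassesLift (Gf : ℕ → Subgroup G) : Prop :=
  ∀ i, 1 ≤ i → ∀ g ∈ Gf i, (∀ k, 1 ≤ k → ∀ x ∈ Gf k, ⁅g, x⁆ ∈ Gf (i + k + 1)) →
    ∃ z ∈ center G ⊓ Gf i, g⁻¹ * z ∈ Gf (i + 1)

theorem CentralClassesLift.isCentralMod_succ (hlift : CentralClassesLift Gf)
    (hdesc : ∀ i, 1 ≤ i → Gf (i + 1) ≤ Gf i) {g : G} {n j : ℕ} (hn : 1 ≤ n) (hnj : n < j)
    (hg : InnerShifts Gf g j) (hgn : IsCentralMod Gf g n) : IsCentralMod Gf g (n + 1) := by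
  obtain ⟨z, hz, hgz⟩ := hgn
  have hshift : InnerShifts Gf (g * z) (n + 1) :=
    (innerShifts_mul_of_mem_center hz).mpr (hg.mono hdesc hnj)
  obtain ⟨z', ⟨hz'c, -⟩, hz'⟩ := hlift n hn (g * z) hgz fun k hk x hx => by
    rw [show n + k + 1 = k + (n + 1) by omega]
    exact hshift k hk x hx
  refine ⟨z * z'⁻¹, mul_mem hz (inv_mem hz'c), ?_⟩
  have hgzz' : (g * z)⁻¹ * z' = (g * (z * z'⁻¹))⁻¹ := by
    rw [mem_center_iff.mp hz'c]
    group
  exact inv_mem_iff.mp (hgzz' ▸ hz')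

theorem CentralClassesLift.isCentralMod_of_innerShifts (hlift : CentralClassesLift Gf)
    (h1 : Gf 1 = ⊤) (hdesc : ∀ i, 1 ≤ i → Gf (i + 1) ≤ Gf i) {g : G} {j : ℕ} (hj : 1 ≤ j)
    (hg : InnerShifts Gf g j) : IsCentralMod Gf g j := by
  induction j, hj using Nat.le_induction with
  | base => exact ⟨1, one_mem _, by simp [h1]⟩
  | succ n hn ih =>
    exact hlift.isCentralMod_succ hdesc hn (by omega) hg (ih (hg.mono hdesc (by omega)))

theorem centralClassesLift_of_innerShifts_imp_isCentralMod
    (hdesc : ∀ i, 1 ≤ i → Gf (i + 1) ≤ Gf i)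
    (hcentral : ∀ j, 1 ≤ j → ∀ g : G, InnerShifts Gf g j → IsCentralMod Gf g j) :
    CentralClassesLift Gf := by
  intro i hi g hg hshift
  obtain ⟨z, hz, hgz⟩ := hcentral (i + 1) (by omega) g fun k hk x hx => by
    rw [show k + (i + 1) = i + k + 1 by omega]
    exact hshift k hk x hx
  have hzi : z ∈ Gf i := by
    simpa using mul_mem (inv_mem hg) (hdesc i hi hgz)
  refine ⟨z⁻¹, mem_inf.mpr ⟨inv_mem hz, inv_mem hzi⟩, ?_⟩
  rw [mem_center_iff.mp (inv_mem hz) g⁻¹, ← mul_inv_rev]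
  exact inv_mem hgz

end Subgroup

/-- Theorem 2.1. Let `G` be a group and `Gf` a strongly central filtration
on `G` (indexed so that `Gf 1 = G`, `Gf` is nested for indices `≥ 1`, and
`[Gf i, Gf j] ⊆ Gf (i+j)`).  Then the image of `Gf` in `Inn(G)` coincides with
`Inn(G) ∩ 𝒜_*(Gf)` (condition (1)) if and only if every central element of `Lie(Gf)` is the
class of a central element of `G` (condition (2)). -/
theorem andreadakis_for_inner_general {G : Type*} [Group G] (Gf : ℕ → Subgroup G)
    (h1 : Gf 1 = ⊤)
    (hdesc : ∀ i, 1 ≤ i → Gf (i + 1) ≤ Gf i)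
    (hsc : ∀ i j, 1 ≤ i → 1 ≤ j → ∀ g ∈ Gf i, ∀ x ∈ Gf j, ⁅g, x⁆ ∈ Gf (i + j)) :
    (∀ j, 1 ≤ j → ∀ g : G,
        ((∀ i, 1 ≤ i → ∀ x ∈ Gf i, ⁅g, x⁆ ∈ Gf (i + j)) ↔
          ∃ z ∈ Subgroup.center G, g * z ∈ Gf j)) ↔
    (∀ i, 1 ≤ i → ∀ g ∈ Gf i,
        (∀ k, 1 ≤ k → ∀ x ∈ Gf k, ⁅g, x⁆ ∈ Gf (i + k + 1)) →
        ∃ z ∈ Subgroup.center G ⊓ Gf i, g⁻¹ * z ∈ Gf (i + 1)) := by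
  constructor
  · intro H
    exact Subgroup.centralClassesLift_of_innerShifts_imp_isCentralMod hdesc
      fun j hj g => (H j hj g).mp
  · intro H j hj g
    exact ⟨Subgroup.CentralClassesLift.isCentralMod_of_innerShifts H h1 hdesc hj,
      Subgroup.innerShifts_of_isCentralMod hsc hj⟩
end

section
/- Let G be a group with center Z(G), and let Γ_1(G) = G, Γ_{k+1}(G) = [G, Γ_k(G)] be its lower central series, where [g,x] = gxg⁻¹x⁻¹. Then the following two conditions are equivalent: (1) for every j ≥ 1 and every g ∈ G, one has ((for all i ≥ 1 and all x ∈ Γ_i(G), [g,x] ∈ Γ_{i+j}(G)) if and only if there exists z ∈ Z(G) with g·z ∈ Γ_j(G)); (2) for every i ≥ 1 and every g ∈ Γ_i(G) such that for all k ≥ 1 and all x ∈ Γ_k(G) one has [g,x] ∈ Γ_{i+k+1}(G), there exists z ∈ Z(G) ∩ Γ_i(G) with g⁻¹·z ∈ Γ_{i+1}(G). -/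
/-!
A central element `z` commutes with everything, so `g` and `g * z` have the same commutators;
together with `⁅Γ_i, Γ_j⁆ ≤ Γ_{i+j}` (three subgroups lemma) this gives the right-to-left half of
condition (1) in every group. The left-to-right half, restricted to `g ∈ Γ_i` and `j = i + 1`, is
condition (2); conversely (2) gives it by induction on `j`: once `g * z ∈ Γ_j`, the element
`g * z` satisfies the hypothesis of (2), which corrects `z` by a further central element so that
the product lands in `Γ_{j+1}`.
-/

open Subgroup

open scoped commutatorElement

namespace Subgroup

variable {G : Type*} [Group G]

theorem commutator_commutator_le_of_rotate {H₁ H₂ H₃ N : Subgroup G} [N.Normal]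
    (h1 : ⁅⁅H₂, H₃⁆, H₁⁆ ≤ N) (h2 : ⁅⁅H₃, H₁⁆, H₂⁆ ≤ N) : ⁅⁅H₁, H₂⁆, H₃⁆ ≤ N := by
  have le_iff_map_eq_bot (K : Subgroup G) : K ≤ N ↔ K.map (QuotientGroup.mk' N) = ⊥ := by
    rw [map_eq_bot_iff, QuotientGroup.ker_mk']
  simp only [le_iff_map_eq_bot, map_commutator] at h1 h2 ⊢
  exact commutator_commutator_eq_bot_of_rotate h1 h2

theorem commutator_lowerCentralSeries_le (m n : ℕ) :
    ⁅(⊤ : Subgroup G).lowerCentralSeries m, (⊤ : Subgroup G).lowerCentralSeries n⁆ ≤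
      (⊤ : Subgroup G).lowerCentralSeries (m + n + 1) := by
  induction n generalizing m with
  | zero => rfl
  | succ n ih =>
    rw [lowerCentralSeries_succ, commutator_comm]
    apply commutator_commutator_le_of_rotate
    · rw [commutator_comm ⊤, ← lowerCentralSeries_succ]
      exact (ih (m + 1)).trans (lowerCentralSeries_antitone _ (by omega))
    · exact commutator_mono (ih m) le_rfl

end Subgroup

section Andreadakis

variable {G : Type*} [Group G]

theorem commutatorElement_mul_left_of_mem_center {z : G} (hz : z ∈ center G) (g x : G) :
    ⁅g * z, x⁆ = ⁅g, x⁆ := by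
  rw [commutatorElement_def, commutatorElement_def, mul_inv_rev, mul_assoc g z x,
    ← (mem_center_iff.mp hz x)]
  group

theorem inv_mul_mem_iff_mul_inv_mem_of_mem_center {H : Subgroup G} {z : G} (hz : z ∈ center G)
    (g : G) : g⁻¹ * z ∈ H ↔ g * z⁻¹ ∈ H := by
  rw [← H.inv_mem_iff, mul_inv_rev, inv_inv, mem_center_iff.mp (inv_mem hz) g]

/-- Conjugation by `g` lies in the `(j + 1)`-st term of the Andreadakis filtration of `Aut G`
(numbered from `1`): it moves each `Γ_{i+1}` only modulo `Γ_{i+j+2}`. -/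
def InnerMemAndreadakis (j : ℕ) (g : G) : Prop :=
  ∀ i, ∀ x ∈ (⊤ : Subgroup G).lowerCentralSeries i,
    ⁅g, x⁆ ∈ (⊤ : Subgroup G).lowerCentralSeries (i + j + 1)

theorem innerMemAndreadakis_succ_iff (i : ℕ) (g : G) :
    InnerMemAndreadakis (i + 1) g ↔ ∀ k, ∀ x ∈ (⊤ : Subgroup G).lowerCentralSeries k,
      ⁅g, x⁆ ∈ (⊤ : Subgroup G).lowerCentralSeries (i + k + 2) := by
  simp only [InnerMemAndreadakis, show ∀ k, k + (i + 1) + 1 = i + k + 2 from fun k => by omega]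

theorem InnerMemAndreadakis.mono {j j' : ℕ} {g : G} (h : InnerMemAndreadakis j' g)
    (hj : j ≤ j') : InnerMemAndreadakis j g := fun i x hx =>
  Subgroup.lowerCentralSeries_antitone _ (by omega) (h i x hx)

theorem innerMemAndreadakis_mul_of_mem_center {j : ℕ} {g z : G} (hz : z ∈ center G) :
    InnerMemAndreadakis j (g * z) ↔ InnerMemAndreadakis j g := by
  simp only [InnerMemAndreadakis, commutatorElement_mul_left_of_mem_center hz]

theorem innerMemAndreadakis_of_mul_mem {j : ℕ} {g z : G} (hz : z ∈ center G)
    (hgz : g * z ∈ (⊤ : Subgroup G).lowerCentralSeries j) : InnerMemAndreadakis j g := by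
  rw [← innerMemAndreadakis_mul_of_mem_center hz]
  intro i x hx
  rw [add_comm i j]
  exact commutator_lowerCentralSeries_le j i (commutator_mem_commutator hgz hx)

theorem exists_mul_mem_of_innerMemAndreadakis
    (h : ∀ i, ∀ g ∈ (⊤ : Subgroup G).lowerCentralSeries i, InnerMemAndreadakis (i + 1) g →
      ∃ z ∈ center G, g⁻¹ * z ∈ (⊤ : Subgroup G).lowerCentralSeries (i + 1))
    {j : ℕ} {g : G} (hg : InnerMemAndreadakis j g) :
    ∃ z ∈ center G, g * z ∈ (⊤ : Subgroup G).lowerCentralSeries j := by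
  induction j with
  | zero => exact ⟨1, one_mem _, mem_top _⟩
  | succ j ih =>
    obtain ⟨z, hz, hgz⟩ := ih (hg.mono j.le_succ)
    obtain ⟨w, hw, hgzw⟩ :=
      h j (g * z) hgz ((innerMemAndreadakis_mul_of_mem_center hz).mpr hg)
    rw [inv_mul_mem_iff_mul_inv_mem_of_mem_center hw, mul_assoc] at hgzw
    exact ⟨z * w⁻¹, mul_mem hz (inv_mem hw), hgzw⟩

end Andreadakis

/-- Corollary 2.2. For a group `G`, the subgroup `Inn(G)` of `IA(G)` satisfies
the Andreadakis equality (condition (1)) if and only if every central element of the Lie ring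
`Lie(G)` of the lower central series is the class of a central element of `G` (condition (2)).
Here `Γ_{k+1}(G) = lowerCentralSeries G k`, so indices are shifted by one:
`lowerCentralSeries G i'` is `Γ_{i'+1}(G)`. -/
theorem andreadakis_for_inner_lcs {G : Type*} [Group G] :
    (∀ j : ℕ, ∀ g : G,
        ((∀ i : ℕ, ∀ x ∈ (⊤ : Subgroup G).lowerCentralSeries i,
            ⁅g, x⁆ ∈ (⊤ : Subgroup G).lowerCentralSeries (i + j + 1)) ↔
          ∃ z ∈ Subgroup.center G, g * z ∈ (⊤ : Subgroup G).lowerCentralSeries j)) ↔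
    (∀ i : ℕ, ∀ g ∈ (⊤ : Subgroup G).lowerCentralSeries i,
        (∀ k : ℕ, ∀ x ∈ (⊤ : Subgroup G).lowerCentralSeries k,
            ⁅g, x⁆ ∈ (⊤ : Subgroup G).lowerCentralSeries (i + k + 2)) →
        ∃ z ∈ Subgroup.center G ⊓ (⊤ : Subgroup G).lowerCentralSeries i,
          g⁻¹ * z ∈ (⊤ : Subgroup G).lowerCentralSeries (i + 1)) := by
  simp only [← innerMemAndreadakis_succ_iff]
  constructor
  · intro h1 i g hg hcomm
    obtain ⟨z, hz, hgz⟩ := (h1 (i + 1) g).mp hcomm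
    have hzi : z ∈ (⊤ : Subgroup G).lowerCentralSeries i := by
      simpa using mul_mem (inv_mem hg) (Subgroup.lowerCentralSeries_antitone _ i.le_succ hgz)
    refine ⟨z⁻¹, mem_inf.mpr ⟨inv_mem hz, inv_mem hzi⟩, ?_⟩
    rwa [inv_mul_mem_iff_mul_inv_mem_of_mem_center (inv_mem hz), inv_inv]
  · intro h2 j g
    refine ⟨exists_mul_mem_of_innerMemAndreadakis fun i g hg hcomm => ?_,
      fun ⟨z, hz, hgz⟩ => innerMemAndreadakis_of_mul_mem hz hgz⟩
    obtain ⟨z, hz, hgz⟩ := h2 i g hg hcomm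
    exact ⟨z, (mem_inf.mp hz).1, hgz⟩
end

section
/- Let n ≥ 1, let F_n be the free group on x_1, …, x_n, and let ∂_n = x_1⋯x_n. Inside Aut(F_n), the intersection of Aut^∂_C(F_n) with the subgroup Inn(F_n) of inner automorphisms is the cyclic subgroup {c_{∂_n}^m : m ∈ ℤ} generated by the inner automorphism c_{∂_n} : x ↦ ∂_n x ∂_n⁻¹. Moreover, c_{∂_n} commutes with every element of Aut^∂_C(F_n). -/
/-- The boundary element `∂_n = x_1 ⋯ x_n` of the free group on `n` generators. -/
def boundary (n : ℕ) : FreeGroup (Fin n) :=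
  (List.ofFn fun i : Fin n => FreeGroup.of i).prod

/-- The subgroup `Aut^∂_C(F_n)` of automorphisms fixing the boundary element and sending each
generator to a conjugate of itself; by Artin's theorem it is isomorphic to the pure braid
group `P_n`. -/
def AutBC (n : ℕ) : Subgroup (MulAut (FreeGroup (Fin n))) where
  carrier := {φ | φ (boundary n) = boundary n ∧
    ∀ i : Fin n, IsConj (FreeGroup.of i) (φ (FreeGroup.of i))}
  one_mem' := ⟨rfl, fun _ => IsConj.refl _⟩
  mul_mem' := by
    rintro φ ψ ⟨hφ1, hφ2⟩ ⟨hψ1, hψ2⟩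
    refine ⟨?_, fun i => ?_⟩
    · show φ (ψ (boundary n)) = boundary n
      rw [hψ1, hφ1]
    · show IsConj (FreeGroup.of i) (φ (ψ (FreeGroup.of i)))
      exact (hφ2 i).trans (φ.toMonoidHom.map_isConj (hψ2 i))
  inv_mem' := by
    rintro φ ⟨hφ1, hφ2⟩
    refine ⟨?_, fun i => ?_⟩
    · show φ⁻¹ (boundary n) = boundary n
      conv_lhs => rw [← hφ1]
      exact φ.symm_apply_apply _
    · show IsConj (FreeGroup.of i) (φ⁻¹ (FreeGroup.of i))
      have h1 := (φ⁻¹ : MulAut (FreeGroup (Fin n))).toMonoidHom.map_isConj (hφ2 i)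
      simp only [MulEquiv.coe_toMonoidHom] at h1
      have h2 : φ⁻¹ (φ (FreeGroup.of i)) = FreeGroup.of i := φ.symm_apply_apply _
      rw [h2] at h1
      exact h1.symm

/-!
If `c_g` fixes `∂_n`, then `g` commutes with `∂_n`. Two commuting elements of a free group
generate a subgroup that is free (Nielsen–Schreier) and abelian, hence cyclic, so `g` and `∂_n`
are powers of a common `r`. Since `x_1` occurs in `∂_n` with exponent sum `1`, `∂_n = r^{±1}`, and
`g` is a power of `∂_n`. Finally `φ c_{∂_n} φ⁻¹ = c_{φ(∂_n)} = c_{∂_n}` for `φ ∈ Aut^∂_C(F_n)`.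
-/

open Subgroup

namespace FreeGroup

variable {α : Type*}

theorem eq_of_commute_of {i j : α} (h : Commute (of i) (of j)) : i = j := by
  classical
  by_contra hij
  have := h.map (lift fun x => if x = i then Equiv.swap (0 : Fin 3) 1 else Equiv.swap 1 2)
  rw [lift_apply_of, lift_apply_of, if_pos rfl, if_neg (Ne.symm hij)] at this
  exact absurd this (by unfold Commute SemiconjBy; decide)

instance isCyclic_of_subsingleton [Subsingleton α] : IsCyclic (FreeGroup α) := by
  cases isEmpty_or_nonempty α
  · infer_instance
  · have := uniqueOfSubsingleton (Classical.arbitrary α)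
    infer_instance

end FreeGroup

theorem IsFreeGroup.isCyclic_of_isMulCommutative (G : Type*) [Group G] [IsFreeGroup G]
    [IsMulCommutative G] : IsCyclic G := by
  let e := IsFreeGroup.mulEquiv G
  have : Subsingleton (IsFreeGroup.Generators G) := ⟨fun i j => FreeGroup.eq_of_commute_of <|
    by simpa [Commute, SemiconjBy] using congrArg e.symm (mul_comm' (e (.of i)) (e (.of j)))⟩
  exact isCyclic_of_surjective e e.surjective

theorem FreeGroup.exists_zpowers_of_commute {α : Type*} {a b : FreeGroup α} (h : Commute a b) :
    ∃ r : FreeGroup α, a ∈ zpowers r ∧ b ∈ zpowers r := by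
  let H := closure {a, b}
  have : IsMulCommutative H := isMulCommutative_closure <| by
    rintro x (rfl | rfl) y (rfl | rfl) <;> first | rfl | exact h | exact h.symm
  have := IsFreeGroup.isCyclic_of_isMulCommutative H
  obtain ⟨r, hr⟩ := H.isCyclic_iff_exists_zpowers_eq_top.mp this
  exact ⟨r, hr ▸ subset_closure (by simp), hr ▸ subset_closure (by simp)⟩

theorem MulAut.mul_conj {G : Type*} [Group G] (φ : MulAut G) (g : G) :
    φ * MulAut.conj g = MulAut.conj (φ g) * φ := by
  ext x
  simp [MulAut.conj_apply]

section Boundary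

variable {n : ℕ}

theorem lift_mulSingle_boundary {M : Type*} [CommGroup M] (i : Fin n) (x : M) :
    FreeGroup.lift (Pi.mulSingle i x) (boundary n) = x := by
  simp [boundary, map_list_prod, List.prod_ofFn]

theorem mem_zpowers_boundary_of_boundary_mem_zpowers (hn : 1 ≤ n) {r : FreeGroup (Fin n)}
    (h : boundary n ∈ zpowers r) : r ∈ zpowers (boundary n) := by
  obtain ⟨k, hk⟩ := mem_zpowers_iff.mp h
  have hk1 : k * (FreeGroup.lift (Pi.mulSingle ⟨0, hn⟩ (Multiplicative.ofAdd (1 : ℤ))) r).toAdd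
      = 1 := by
    rw [← smul_eq_mul, ← toAdd_zpow, ← map_zpow, hk, lift_mulSingle_boundary, toAdd_ofAdd]
  have hkk : k * k = 1 := by
    rcases Int.eq_one_or_neg_one_of_mul_eq_one hk1 with rfl | rfl <;> rfl
  exact mem_zpowers_iff.mpr ⟨k, by rw [← hk, ← zpow_mul, hkk, zpow_one]⟩

theorem mem_zpowers_boundary_of_commute (hn : 1 ≤ n) {g : FreeGroup (Fin n)}
    (h : Commute g (boundary n)) : g ∈ zpowers (boundary n) := by
  obtain ⟨r, hg, hb⟩ := FreeGroup.exists_zpowers_of_commute h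
  exact zpowers_le.mpr (mem_zpowers_boundary_of_boundary_mem_zpowers hn hb) hg

theorem conj_mem_AutBC_iff {g : FreeGroup (Fin n)} :
    MulAut.conj g ∈ AutBC n ↔ Commute g (boundary n) := by
  refine ⟨fun h => mul_inv_eq_iff_eq_mul.mp h.1, fun h => ⟨?_, fun i => ?_⟩⟩
  · exact mul_inv_eq_iff_eq_mul.mpr h
  · exact isConj_iff.mpr ⟨g, rfl⟩

end Boundary

/-- Lemma 3.4. Inside `Aut(F_n)`, the intersection of `Aut^∂_C(F_n)` with
the subgroup `Inn(F_n)` of inner automorphisms is the cyclic subgroup generated by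
`c_{∂_n}`; moreover `c_{∂_n}` commutes with every element of `Aut^∂_C(F_n)`. -/
theorem AutBC_inter_inn (n : ℕ) (hn : 1 ≤ n) :
    AutBC n ⊓ (MulAut.conj : FreeGroup (Fin n) →* MulAut (FreeGroup (Fin n))).range =
        Subgroup.zpowers (MulAut.conj (boundary n)) ∧
      ∀ φ ∈ AutBC n, MulAut.conj (boundary n) * φ = φ * MulAut.conj (boundary n) := by
  refine ⟨le_antisymm ?_ ?_, fun φ hφ => ?_⟩
  · rintro _ ⟨hg, g, rfl⟩
    rw [← MonoidHom.map_zpowers]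
    exact mem_map_of_mem _ (mem_zpowers_boundary_of_commute hn (conj_mem_AutBC_iff.mp hg))
  · exact zpowers_le.mpr
      ⟨conj_mem_AutBC_iff.mpr (Commute.refl _), MonoidHom.mem_range.mpr ⟨_, rfl⟩⟩
  · rw [MulAut.mul_conj, hφ.1]
end

section
/- Let n ≥ 1 and let 𝔏_n be the free Lie ring (free Lie algebra over ℤ) on generators X_1, …, X_n. Let a_1, …, a_n be integers whose greatest common divisor is 1, let d be a nonzero integer, and set X = d·(a_1 X_1 + ⋯ + a_n X_n) ∈ 𝔏_n. Then the centralizer of X in 𝔏_n equals the set of integer multiples of a_1 X_1 + ⋯ + a_n X_n; that is, for y ∈ 𝔏_n one has ⁅y, X⁆ = 0 if and only if y = m·(a_1 X_1 + ⋯ + a_n X_n) for some m ∈ ℤ. -/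
/-!
The free Lie ring embeds into the free associative ring `ℤ⟨X₁, …, Xₙ⟩`, with coefficients indexed
by words. Bracketing each Lyndon word along its standard factorization gives elements spanning the
free Lie ring (rewrite a bracket of two of them with the Jacobi identity, by induction on the
length and then on the right word), and their images are unitriangular for the lexicographic order
(the leading word of the image of `w` is `w`), hence linearly independent.

In the free associative ring, if `P` commutes with `U = ∑ aᵢ Xᵢ` then comparing coefficients gives
the exchange relation `a^t P(v) = a^v P(t)` for words of the same length. If `P` is a Lie element,
its image under `Xᵢ ↦ aᵢ X` lies in `ℤ X`, so `∑_{|m| = k} P(m) a^m = 0` for `k ≠ 1`; multiplied by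
`P(w)`, `|w| = k`, this becomes `a^w ∑_{|m| = k} P(m)² = 0`, which forces `P(w) = 0` (if `a^w = 0`,
use `aᵢ^k P(w) = a^w P(Xᵢ^k)` with `aᵢ ≠ 0`). In degree one the exchange relation and
`gcd aᵢ = 1` (Bézout) give `P = m U`.
-/

attribute [local instance] LieRing.ofAssociativeRing

namespace List

variable {α : Type*} {s t u v w x y : List α}

theorem suffix_tail_of_suffix (hs : s <:+ w) (hlen : s.length < w.length) : s <:+ w.tail := by
  obtain ⟨r, rfl⟩ := hs
  cases r with
  | nil => simp at hlen
  | cons a r => exact suffix_append r s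

theorem length_lt_of_suffix_tail (hs : s <:+ w.tail) (hne : s ≠ []) : s.length < w.length := by
  have := hs.length_le
  cases w with
  | nil => simp_all
  | cons a w => simp only [tail_cons, length_cons] at this ⊢; omega

theorem suffix_tail_append_cases (hu : u ≠ []) (hs : s <:+ (u ++ v).tail) :
    s <:+ v ∨ ∃ s', s' <:+ u.tail ∧ s' ≠ [] ∧ s = s' ++ v := by
  rw [tail_append_of_ne_nil hu] at hs
  rcases suffix_or_suffix_of_suffix hs (suffix_append u.tail v) with h | ⟨s', rfl⟩
  · exact Or.inl h
  · rcases eq_or_ne s' [] with rfl | hs'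
    · exact Or.inl (by simp)
    · exact Or.inr ⟨s', suffix_append_self_iff.1 hs, hs', rfl⟩

section LinearOrder

variable [LinearOrder α]

theorem lt_append_of_ne_nil (x : List α) (hs : s ≠ []) : x < x ++ s := by
  induction x with
  | nil => cases s with
    | nil => exact absurd rfl hs
    | cons => exact Lex.nil
  | cons a t ih => exact Lex.cons ih

theorem lt_of_append_lt_append_left (p : List α) (h : p ++ x < p ++ y) : x < y := by
  induction p with
  | nil => exact h
  | cons a t ih =>
    cases h with
    | rel h' => exact absurd h' (lt_irrefl a)
    | cons h' => exact ih h'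

theorem append_lt_append_of_lt_of_not_prefix (h : x < y) (hp : ¬ x <+: y) (s t : List α) :
    x ++ s < y ++ t := by
  induction h with
  | nil => exact absurd nil_prefix hp
  | rel hab => exact Lex.rel hab
  | cons _ ih => exact Lex.cons (ih fun hpre => hp (by simpa using hpre))

theorem append_lt_append_of_lt_of_length_le (h : x < y) (hlen : y.length ≤ x.length)
    (s t : List α) : x ++ s < y ++ t :=
  append_lt_append_of_lt_of_not_prefix h
    (fun hp => lt_irrefl y (hp.eq_of_length_le hlen ▸ h)) s t

theorem append_lt_append_left (p : List α) (h : x < y) : p ++ x < p ++ y := by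
  induction p with
  | nil => exact h
  | cons a t ih => exact Lex.cons ih

theorem append_le_append_of_length_eq (hxy : x ≤ y) (hlen : x.length = y.length)
    (hvw : v ≤ w) : x ++ v ≤ y ++ w := by
  rcases hxy.eq_or_lt with rfl | h
  · rcases hvw.eq_or_lt with rfl | h
    · exact le_rfl
    · exact (append_lt_append_left x h).le
  · exact (append_lt_append_of_lt_of_length_le h hlen.ge v w).le

theorem le_append_of_le (h : x ≤ y) (t : List α) : x ≤ y ++ t := by
  rcases h.eq_or_lt with rfl | h
  · rcases eq_or_ne t [] with rfl | ht
    · rw [append_nil]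
    · exact (lt_append_of_ne_nil x ht).le
  · exact le_of_lt (Lex.append_right _ t h)

/-- The nonempty proper suffixes of `w` are the nonempty suffixes of `w.tail`. -/
def IsLyndon (w : List α) : Prop :=
  w ≠ [] ∧ ∀ s, s <:+ w.tail → s ≠ [] → w < s

/-- The smallest nonempty proper suffix of `w` (`[]` if there is none). For a Lyndon word `w`,
`(stdPrefix w, stdSuffix w)` is its standard factorization. -/
def stdSuffix (w : List α) : List α :=
  ((w.tail.tails.filter (· ≠ [])).min?).getD []

def stdPrefix (w : List α) : List α :=
  w.take (w.length - (stdSuffix w).length)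

theorem stdSuffix_suffix_tail (w : List α) : stdSuffix w <:+ w.tail := by
  unfold stdSuffix
  cases h : (w.tail.tails.filter (· ≠ [])).min? with
  | none => exact nil_suffix
  | some m => simpa using (mem_filter.1 (min?_mem h)).1

theorem stdSuffix_le (hs : s <:+ w.tail) (hne : s ≠ []) : stdSuffix w ≤ s := by
  have hmem : s ∈ w.tail.tails.filter (· ≠ []) := by simpa [mem_filter] using ⟨hs, hne⟩
  unfold stdSuffix
  cases h : (w.tail.tails.filter (· ≠ [])).min? with
  | none => simp_all
  | some m => exact (min?_eq_some_iff.1 h).2 s hmem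

theorem stdSuffix_ne_nil (hw : w.tail ≠ []) : stdSuffix w ≠ [] := by
  have hmem : w.tail ∈ w.tail.tails.filter (· ≠ []) := by simpa [mem_filter] using hw
  unfold stdSuffix
  cases h : (w.tail.tails.filter (· ≠ [])).min? with
  | none => simp_all
  | some m => simpa using (mem_filter.1 (min?_mem h)).2

theorem stdPrefix_append_stdSuffix (w : List α) : stdPrefix w ++ stdSuffix w = w := by
  have h := suffix_iff_eq_drop.1 ((stdSuffix_suffix_tail w).trans (tail_suffix w))
  rw [stdPrefix]
  nth_rw 2 [h]
  exact take_append_drop _ _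

theorem length_stdSuffix_lt (hw : w ≠ []) : (stdSuffix w).length < w.length := by
  have := (stdSuffix_suffix_tail w).length_le
  rw [length_tail] at this
  have := length_pos_iff.2 hw
  omega

theorem stdPrefix_ne_nil (hw : w ≠ []) : stdPrefix w ≠ [] := by
  intro h
  have := congrArg length (stdPrefix_append_stdSuffix w)
  rw [h, nil_append] at this
  exact (length_stdSuffix_lt hw).ne this

theorem stdPrefix_lt (hw : w.tail ≠ []) : stdPrefix w < w := by
  conv_rhs => rw [← stdPrefix_append_stdSuffix w]
  exact lt_append_of_ne_nil _ (stdSuffix_ne_nil hw)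

theorem length_stdPrefix_lt (hw : w.tail ≠ []) : (stdPrefix w).length < w.length := by
  have h := congrArg length (stdPrefix_append_stdSuffix w)
  have := length_pos_iff.2 (stdSuffix_ne_nil hw)
  rw [length_append] at h
  omega

theorem isLyndon_singleton (i : α) : IsLyndon [i] :=
  ⟨cons_ne_nil i [], fun _ hs hne => absurd (suffix_nil.1 hs) hne⟩

theorem isLyndon_stdSuffix (hw : w.tail ≠ []) : IsLyndon (stdSuffix w) := by
  refine ⟨stdSuffix_ne_nil hw, fun s hs hne => lt_of_le_of_ne ?_ ?_⟩
  · exact stdSuffix_le ((hs.trans (tail_suffix _)).trans (stdSuffix_suffix_tail w)) hne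
  · rintro rfl
    exact (length_lt_of_suffix_tail hs hne).false

namespace IsLyndon

theorem ne_nil (h : IsLyndon w) : w ≠ [] := h.1

theorem le_of_suffix (h : IsLyndon w) (hs : s <:+ w) (hne : s ≠ []) : w ≤ s := by
  rcases lt_or_eq_of_le hs.length_le with hlen | hlen
  · exact (h.2 s (suffix_tail_of_suffix hs hlen) hne).le
  · exact (hs.eq_of_length hlen).ge

theorem append_lt_right_of_ne_nil (h : IsLyndon (u ++ v)) (hu : u ≠ []) (hv : v ≠ []) :
    u ++ v < v :=
  h.2 v (suffix_tail_of_suffix (suffix_append u v) (by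
    rw [length_append]; have := length_pos_iff.2 hu; omega)) hv

theorem lt_stdSuffix (h : IsLyndon w) (hw : w.tail ≠ []) : w < stdSuffix w :=
  h.2 _ (stdSuffix_suffix_tail w) (stdSuffix_ne_nil hw)

theorem stdPrefix_lt_stdSuffix (h : IsLyndon w) (hw : w.tail ≠ []) :
    stdPrefix w < stdSuffix w :=
  (stdPrefix_lt hw).trans (h.lt_stdSuffix hw)

/-- For a nonempty suffix `s` of `(stdPrefix w).tail`, `s ++ stdSuffix w` is a proper suffix of `w`;
comparing it with `w`, the minimality of `stdSuffix w` forces `stdPrefix w < s`. -/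
protected theorem stdPrefix (h : IsLyndon w) : IsLyndon (stdPrefix w) := by
  have hw₀ : w ≠ [] := h.ne_nil
  set p := stdPrefix w
  set m := stdSuffix w
  have hpm : p ++ m = w := stdPrefix_append_stdSuffix w
  refine ⟨stdPrefix_ne_nil hw₀, fun s hs hne => ?_⟩
  by_contra hps
  have hsp : s < p := lt_of_le_of_ne (not_lt.1 hps) (by
    rintro rfl; exact (length_lt_of_suffix_tail hs hne).false)
  have hwsm : w < s ++ m := by
    refine h.2 _ ?_ (by simp [hne])
    rw [← hpm, tail_append_of_ne_nil (stdPrefix_ne_nil hw₀)]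
    exact suffix_append_self_iff.2 hs
  by_cases hpre : s <+: p
  · obtain ⟨r, hr⟩ := hpre
    have hrne : r ≠ [] := by rintro rfl; rw [append_nil] at hr; exact hsp.ne hr
    have hw : s ++ (r ++ m) = w := by rw [← append_assoc, hr, hpm]
    have hrm : r ++ m < m := lt_of_append_lt_append_left s (hw ▸ hwsm)
    have hsuf : r ++ m <:+ w.tail := by
      rw [← hw, tail_append_of_ne_nil hne]; exact suffix_append _ _
    exact not_le.2 hrm (stdSuffix_le hsuf (by simp [hrne]))
  · exact (hwsm.trans (hpm ▸ append_lt_append_of_lt_of_not_prefix hsp hpre m m)).false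

theorem append_left_lt (hv : IsLyndon v) (hu : u ≠ []) (huv : u < v) : u ++ v < v := by
  by_cases hpre : u <+: v
  · obtain ⟨r, rfl⟩ := hpre
    have hr : r ≠ [] := by rintro rfl; rw [append_nil] at huv; exact huv.false
    exact append_lt_append_left u (hv.append_lt_right_of_ne_nil hu hr)
  · simpa using append_lt_append_of_lt_of_not_prefix huv hpre v []

theorem append_lt_append_swap (hv : IsLyndon v) (hu : u ≠ []) (huv : u < v) :
    u ++ v < v ++ u := by
  by_cases hpre : u <+: v
  · obtain ⟨r, rfl⟩ := hpre
    have hr : r ≠ [] := by rintro rfl; rw [append_nil] at huv; exact huv.false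
    have := append_lt_append_of_lt_of_length_le (hv.append_lt_right_of_ne_nil hu hr)
      (by simp) [] u
    rw [append_nil] at this
    simpa using append_lt_append_left u this
  · exact append_lt_append_of_lt_of_not_prefix huv hpre v u

protected theorem append (hu : IsLyndon u) (hv : IsLyndon v) (huv : u < v) :
    IsLyndon (u ++ v) := by
  refine ⟨by simp [hu.ne_nil], fun s hs hne => ?_⟩
  rcases suffix_tail_append_cases hu.ne_nil hs with hsv | ⟨s', hs', hs'ne, rfl⟩
  · exact (hv.append_left_lt hu.ne_nil huv).trans_le (hv.le_of_suffix hsv hne)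
  · exact append_lt_append_of_lt_of_length_le (hu.2 s' hs' hs'ne)
      (length_lt_of_suffix_tail hs' hs'ne).le v v

theorem stdSuffix_append (hv : IsLyndon v) (hu : u ≠ [])
    (hstd : u.tail = [] ∨ v ≤ stdSuffix u) : stdSuffix (u ++ v) = v := by
  refine le_antisymm (stdSuffix_le ?_ hv.ne_nil) ?_
  · rw [tail_append_of_ne_nil hu]; exact suffix_append _ _
  · have hw : (u ++ v).tail ≠ [] := by
      rw [tail_append_of_ne_nil hu]; simp [hv.ne_nil]
    rcases suffix_tail_append_cases hu (stdSuffix_suffix_tail (u ++ v)) with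
      h | ⟨s', hs', hs'ne, h⟩
    · exact hv.le_of_suffix h (stdSuffix_ne_nil hw)
    · rw [h]
      have hut : u.tail ≠ [] := by rintro hut; rw [hut, suffix_nil] at hs'; exact hs'ne hs'
      exact le_append_of_le ((hstd.resolve_left hut).trans (stdSuffix_le hs' hs'ne)) v

theorem stdPrefix_append (hv : IsLyndon v) (hu : u ≠ [])
    (hstd : u.tail = [] ∨ v ≤ stdSuffix u) : stdPrefix (u ++ v) = u := by
  have := stdPrefix_append_stdSuffix (u ++ v)
  rw [hv.stdSuffix_append hu hstd] at this
  exact append_cancel_right this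

end IsLyndon

end LinearOrder

end List

theorem lie_mem_of_mem_span {R L : Type*} [CommRing R] [LieRing L] [LieAlgebra R L]
    {S T : Set L} {p : Submodule R L} (h : ∀ s ∈ S, ∀ t ∈ T, ⁅s, t⁆ ∈ p) {x y : L}
    (hx : x ∈ Submodule.span R S) (hy : y ∈ Submodule.span R T) : ⁅x, y⁆ ∈ p := by
  induction hx, hy using Submodule.span_induction₂ with
  | mem_mem x y hx hy => exact h x hx y hy
  | zero_left y hy => simp
  | zero_right x hx => simp
  | add_left x y z _ _ _ hx hy => simpa [add_lie] using add_mem hx hy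
  | add_right x y z _ _ _ hx hy => simpa [lie_add] using add_mem hx hy
  | smul_left r x y _ _ h => simpa [smul_lie] using p.smul_mem r h
  | smul_right r x y _ _ h => simpa [lie_smul] using p.smul_mem r h

namespace FreeLieAlgebra

open List

variable (R : Type*) [CommRing R] {α : Type*}

section LinearOrder

variable [LinearOrder α]

noncomputable def lyndonBracket : List α → FreeLieAlgebra R α
  | [] => 0
  | [i] => of R i
  | a :: b :: t =>
    ⁅lyndonBracket (stdPrefix (a :: b :: t)), lyndonBracket (stdSuffix (a :: b :: t))⁆
termination_by w => w.length
decreasing_by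
  · exact length_stdPrefix_lt (cons_ne_nil b t)
  · exact length_stdSuffix_lt (cons_ne_nil a _)

@[simp]
theorem lyndonBracket_singleton (i : α) : lyndonBracket R [i] = of R i := by
  rw [lyndonBracket]

theorem lyndonBracket_of_tail_ne_nil {w : List α} (hw : w.tail ≠ []) :
    lyndonBracket R w = ⁅lyndonBracket R (stdPrefix w), lyndonBracket R (stdSuffix w)⁆ := by
  match w, hw with
  | _ :: _ :: _, _ => rw [lyndonBracket]

theorem lyndonBracket_append {u v : List α} (hu : u ≠ []) (hv : IsLyndon v)
    (hstd : u.tail = [] ∨ v ≤ stdSuffix u) :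
    lyndonBracket R (u ++ v) = ⁅lyndonBracket R u, lyndonBracket R v⁆ := by
  rw [lyndonBracket_of_tail_ne_nil R (by simp [tail_append_of_ne_nil hu, hv.ne_nil]),
    hv.stdPrefix_append hu hstd, hv.stdSuffix_append hu hstd]

end LinearOrder

noncomputable def toMonoidAlgebra : FreeLieAlgebra R α →ₗ⁅R⁆ MonoidAlgebra R (FreeMonoid α) :=
  lift R fun i => MonoidAlgebra.single (FreeMonoid.of i) 1

@[simp]
theorem toMonoidAlgebra_of (i : α) :
    toMonoidAlgebra R (of R i) = MonoidAlgebra.single (FreeMonoid.of i) 1 :=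
  lift_of_apply _ i

variable {R}

theorem eq_top_of_of_mem {K : LieSubalgebra R (FreeLieAlgebra R α)} (h : ∀ x, of R x ∈ K) :
    K = ⊤ := by
  let g : FreeLieAlgebra R α →ₗ⁅R⁆ K := lift R fun x => ⟨of R x, h x⟩
  have hg : K.incl.comp g = LieHom.id := hom_ext fun x => by simp [g]
  refine eq_top_iff.2 fun z _ => ?_
  rw [← LieHom.id_apply (R := R) z, ← hg]
  exact (g z).2

end FreeLieAlgebra

namespace MonoidAlgebra

open Finset

variable {R α : Type*}

theorem coeff_mul_ofList [Semiring R] (f g : MonoidAlgebra R (FreeMonoid α)) (x : List α) :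
    (f * g).coeff (.ofList x) =
      ∑ k ∈ range (x.length + 1), f.coeff (.ofList (x.take k)) * g.coeff (.ofList (x.drop k)) := by
  classical
  rw [coeff_mul_antidiag f g _ ((range (x.length + 1)).image fun k =>
    (FreeMonoid.ofList (x.take k), FreeMonoid.ofList (x.drop k))), sum_image]
  · intro i hi j hj h
    have := congrArg (fun p => p.1.toList.length) h
    simp only [mem_coe, mem_range, FreeMonoid.toList_ofList, List.length_take] at hi hj this
    omega
  · rintro ⟨p, q⟩
    simp only [mem_image, mem_range, Prod.mk.injEq]
    constructor
    · rintro ⟨k, -, rfl, rfl⟩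
      exact List.take_append_drop k x
    · intro h
      have h' : p.toList ++ q.toList = x := congrArg FreeMonoid.toList h
      refine ⟨p.toList.length, by rw [← h', List.length_append]; omega, ?_, ?_⟩
      · rw [← h', List.take_left]; rfl
      · rw [← h', List.drop_left]; rfl

theorem exists_append_eq_of_coeff_mul_ne_zero [Semiring R] {f g : MonoidAlgebra R (FreeMonoid α)}
    {x : List α} (h : (f * g).coeff (.ofList x) ≠ 0) :
    ∃ p q, p ++ q = x ∧ f.coeff (.ofList p) ≠ 0 ∧ g.coeff (.ofList q) ≠ 0 := by
  rw [coeff_mul_ofList] at h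
  obtain ⟨k, -, hk⟩ := exists_ne_zero_of_sum_ne_zero h
  exact ⟨_, _, List.take_append_drop k x, left_ne_zero_of_mul hk, right_ne_zero_of_mul hk⟩

variable [LinearOrder α]

section Semiring

variable [Semiring R]

def SupportedAbove (w : List α) (f : MonoidAlgebra R (FreeMonoid α)) : Prop :=
  ∀ v : List α, f.coeff (.ofList v) ≠ 0 → v.length = w.length ∧ w ≤ v

def HasLeadingWord (w : List α) (f : MonoidAlgebra R (FreeMonoid α)) : Prop :=
  f.coeff (.ofList w) = 1 ∧ SupportedAbove w f

variable {u v w w' : List α} {f g : MonoidAlgebra R (FreeMonoid α)}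

theorem SupportedAbove.coeff_mul_append (hf : SupportedAbove u f)
    (g : MonoidAlgebra R (FreeMonoid α)) (v : List α) :
    (f * g).coeff (.ofList (u ++ v)) = f.coeff (.ofList u) * g.coeff (.ofList v) := by
  rw [coeff_mul_ofList, sum_eq_single u.length, List.take_left, List.drop_left]
  · intro k hk hku
    suffices f.coeff (.ofList ((u ++ v).take k)) = 0 by rw [this, zero_mul]
    by_contra hne
    have := (hf _ hne).1
    simp only [mem_range, List.length_append, List.length_take] at hk this
    omega
  · simp

theorem SupportedAbove.mul (hf : SupportedAbove u f) (hg : SupportedAbove v g) :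
    SupportedAbove (u ++ v) (f * g) := by
  intro x hx
  obtain ⟨p, q, rfl, hp, hq⟩ := exists_append_eq_of_coeff_mul_ne_zero hx
  obtain ⟨hpl, hup⟩ := hf p hp
  obtain ⟨hql, hvq⟩ := hg q hq
  exact ⟨by simp [hpl, hql], List.append_le_append_of_length_eq hup hpl.symm hvq⟩

theorem SupportedAbove.of_le (h : SupportedAbove w' f) (hle : w ≤ w')
    (hlen : w.length = w'.length) : SupportedAbove w f := fun v hv =>
  ⟨(h v hv).1.trans hlen.symm, hle.trans (h v hv).2⟩

end Semiring

variable [Ring R] {u v w : List α} {f g : MonoidAlgebra R (FreeMonoid α)}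

theorem SupportedAbove.sub (hf : SupportedAbove w f) (hg : SupportedAbove w g) :
    SupportedAbove w (f - g) := by
  intro v hv
  rw [coeff_sub, Finsupp.sub_apply] at hv
  by_cases hfv : f.coeff (.ofList v) = 0
  · exact hg v (by simpa [hfv] using hv)
  · exact hf v hfv

theorem HasLeadingWord.lie (hf : HasLeadingWord u f) (hg : HasLeadingWord v g)
    (h : u ++ v < v ++ u) : HasLeadingWord (u ++ v) ⁅f, g⁆ := by
  have hgf := hg.2.mul hf.2
  rw [Ring.lie_def]
  refine ⟨?_, (hf.2.mul hg.2).sub (hgf.of_le h.le (by simp [add_comm]))⟩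
  rw [coeff_sub, Finsupp.sub_apply, hf.2.coeff_mul_append, hf.1, hg.1, one_mul, sub_eq_self]
  by_contra hne
  exact not_le.2 h (hgf _ hne).2

theorem linearIndependent_of_hasLeadingWord {ι : Type*} {b : ι → MonoidAlgebra R (FreeMonoid α)}
    {ℓ : ι → List α} (hℓ : Function.Injective ℓ) (hb : ∀ i, HasLeadingWord (ℓ i) (b i)) :
    LinearIndependent R b := by
  classical
  rw [linearIndependent_iff]
  intro l hl
  by_contra hne
  obtain ⟨i₀, hi₀, hmin⟩ := l.support.exists_min_image ℓ (Finsupp.support_nonempty_iff.2 hne)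
  have hcoeff := congrArg (fun f => f.coeff (.ofList (ℓ i₀))) hl
  simp only [Finsupp.linearCombination_apply, Finsupp.sum, coeff_sum, Finsupp.finsetSum_apply,
    coeff_smul_apply, coeff_zero, Finsupp.coe_zero, Pi.zero_apply] at hcoeff
  rw [sum_eq_single i₀ (fun i hi hne => ?_) (fun h => absurd hi₀ h), (hb i₀).1, smul_eq_mul,
    mul_one] at hcoeff
  · exact Finsupp.mem_support_iff.1 hi₀ hcoeff
  · suffices (b i).coeff (.ofList (ℓ i₀)) = 0 by rw [this, smul_zero]
    by_contra h
    exact hne (hℓ (le_antisymm ((hb i).2 _ h).2 (hmin i hi)))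

end MonoidAlgebra

namespace FreeLieAlgebra

open List MonoidAlgebra

variable (R : Type*) [CommRing R] {α : Type*} [LinearOrder α]

theorem hasLeadingWord_toMonoidAlgebra_lyndonBracket {w : List α} (hw : IsLyndon w) :
    HasLeadingWord w (toMonoidAlgebra R (lyndonBracket R w)) := by
  classical
  induction hn : w.length using Nat.strong_induction_on generalizing w with
  | _ n ih =>
  rcases eq_or_ne w.tail [] with ht | ht
  · obtain ⟨i, rfl⟩ : ∃ i, w = [i] := by
      cases w with
      | nil => exact absurd rfl hw.ne_nil
      | cons i t => exact ⟨i, by simpa using ht⟩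
    refine ⟨by simp, fun v hv => ?_⟩
    rw [lyndonBracket_singleton, toMonoidAlgebra_of, coeff_single, Finsupp.single_apply,
      ite_ne_right_iff] at hv
    rw [← FreeMonoid.toList_ofList v, ← hv.1]
    simp
  · have hlt := (isLyndon_stdSuffix ht).append_lt_append_swap (stdPrefix_ne_nil hw.ne_nil)
      (hw.stdPrefix_lt_stdSuffix ht)
    have key := (ih _ (hn ▸ length_stdPrefix_lt ht) hw.stdPrefix rfl).lie
      (ih _ (hn ▸ length_stdSuffix_lt hw.ne_nil) (isLyndon_stdSuffix ht) rfl) hlt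
    rwa [stdPrefix_append_stdSuffix, ← LieHom.map_lie, ← lyndonBracket_of_tail_ne_nil R ht]
      at key

theorem linearIndependent_toMonoidAlgebra_lyndonBracket :
    LinearIndependent R fun w : {w : List α // IsLyndon w} =>
      toMonoidAlgebra R (lyndonBracket R w.1) :=
  linearIndependent_of_hasLeadingWord Subtype.val_injective fun w =>
    hasLeadingWord_toMonoidAlgebra_lyndonBracket R w.2

open Submodule

def lyndonBracketsBetween (N : ℕ) (lo hi : List α) : Set (FreeLieAlgebra R α) :=
  lyndonBracket R '' {w | IsLyndon w ∧ w.length = N ∧ lo ≤ w ∧ w < hi}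

variable {R}

theorem lyndonBracketsBetween_mono {N : ℕ} {lo lo' hi hi' : List α} (hlo : lo' ≤ lo)
    (hhi : hi ≤ hi') : lyndonBracketsBetween R N lo hi ⊆ lyndonBracketsBetween R N lo' hi' := by
  rintro _ ⟨w, ⟨hw, hlen, hlo', hhi'⟩, rfl⟩
  exact ⟨w, ⟨hw, hlen, hlo.trans hlo', hhi'.trans_le hhi⟩, rfl⟩

def LieSpannedBetween (R : Type*) [CommRing R] (u v : List α) : Prop :=
  ⁅lyndonBracket R u, lyndonBracket R v⁆ ∈
    span R (lyndonBracketsBetween R (u.length + v.length) (u ++ v) v)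

/-- The induction hypothesis: all pairs below `(N, v)` in the lexicographic order on
(total length, right word). -/
def LieSpannedBelow (R : Type*) [CommRing R] (N : ℕ) (v : List α) : Prop :=
  ∀ p q : List α, IsLyndon p → IsLyndon q → p < q →
    p.length + q.length < N ∨ (p.length + q.length = N ∧ q < v) → LieSpannedBetween R p q

theorem LieSpannedBetween.mem_span {N : ℕ} {p q lo hi : List α} (h : LieSpannedBetween R p q)
    (hN : p.length + q.length = N) (hlo : lo ≤ p ++ q) (hhi : q ≤ hi) :
    ⁅lyndonBracket R p, lyndonBracket R q⁆ ∈ span R (lyndonBracketsBetween R N lo hi) :=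
  span_mono (hN ▸ lyndonBracketsBetween_mono hlo hhi) h

theorem LieSpannedBelow.lie_mem_span {N : ℕ} {p q lo v : List α} (ih : LieSpannedBelow R N v)
    (hp : IsLyndon p) (hq : IsLyndon q) (hN : p.length + q.length = N) (hpv : p < v) (hqv : q < v)
    (hpq : lo ≤ p ++ q) (hqp : lo ≤ q ++ p) :
    ⁅lyndonBracket R p, lyndonBracket R q⁆ ∈ span R (lyndonBracketsBetween R N lo v) := by
  rcases lt_trichotomy p q with hlt | rfl | hgt
  · exact (ih p q hp hq hlt (.inr ⟨hN, hqv⟩)).mem_span hN hpq hqv.le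
  · simp
  · rw [← lie_skew]
    exact neg_mem ((ih q p hq hp hgt (.inr ⟨by omega, hpv⟩)).mem_span (by omega) hqp hpv.le)

theorem lie_stdPrefix_lie_mem_span {u v : List α} (hu : IsLyndon u) (hu₂ : u.tail ≠ [])
    (hv : IsLyndon v) (hu₂v : stdSuffix u < v) (ih : LieSpannedBelow R (u.length + v.length) v) :
    ⁅lyndonBracket R (stdPrefix u), ⁅lyndonBracket R (stdSuffix u), lyndonBracket R v⁆⁆ ∈
      span R (lyndonBracketsBetween R (u.length + v.length) (u ++ v) v) := by
  have hlen := congrArg length (stdPrefix_append_stdSuffix u)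
  have hpos := length_pos_iff.2 (stdPrefix_ne_nil hu.ne_nil)
  rw [length_append] at hlen
  refine lie_mem_of_mem_span ?_ (mem_span_singleton_self _)
    (ih _ _ (isLyndon_stdSuffix hu₂) hv hu₂v (.inl (by omega)))
  rintro _ rfl _ ⟨w, ⟨hw, hwlen, hlo, hhi⟩, rfl⟩
  have hu₁w : stdPrefix u < w :=
    ((hu.stdPrefix_lt_stdSuffix hu₂).trans_le (le_append_of_le le_rfl v)).trans_le hlo
  refine (ih _ _ hu.stdPrefix hw hu₁w (.inr ⟨by omega, hhi⟩)).mem_span (by omega) ?_ hhi.le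
  calc u ++ v = stdPrefix u ++ (stdSuffix u ++ v) := by
        rw [← append_assoc, stdPrefix_append_stdSuffix]
    _ ≤ stdPrefix u ++ w := append_le_append_of_length_eq le_rfl rfl hlo

theorem lie_lie_stdSuffix_mem_span {u v : List α} (hu : IsLyndon u) (hu₂ : u.tail ≠ [])
    (hv : IsLyndon v) (hu₂v : stdSuffix u < v) (ih : LieSpannedBelow R (u.length + v.length) v) :
    ⁅⁅lyndonBracket R (stdPrefix u), lyndonBracket R v⁆, lyndonBracket R (stdSuffix u)⁆ ∈
      span R (lyndonBracketsBetween R (u.length + v.length) (u ++ v) v) := by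
  have hlen := congrArg length (stdPrefix_append_stdSuffix u)
  have hpos := length_pos_iff.2 (stdSuffix_ne_nil hu₂)
  rw [length_append] at hlen
  refine lie_mem_of_mem_span ?_ (ih _ _ hu.stdPrefix hv
    ((hu.stdPrefix_lt_stdSuffix hu₂).trans hu₂v) (.inl (by omega))) (mem_span_singleton_self _)
  rintro _ ⟨w, ⟨hw, hwlen, hlo, hhi⟩, rfl⟩ _ rfl
  refine ih.lie_mem_span hw (isLyndon_stdSuffix hu₂) (by omega) hhi hu₂v ?_ ?_
  · calc u ++ v = stdPrefix u ++ (stdSuffix u ++ v) := by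
          rw [← append_assoc, stdPrefix_append_stdSuffix]
      _ ≤ stdPrefix u ++ (v ++ stdSuffix u) := (append_lt_append_left _
          (hv.append_lt_append_swap (stdSuffix_ne_nil hu₂) hu₂v)).le
      _ = (stdPrefix u ++ v) ++ stdSuffix u := (append_assoc _ _ _).symm
      _ ≤ w ++ stdSuffix u := append_le_append_of_length_eq hlo (by simp [hwlen]) le_rfl
  · exact (append_lt_append_of_lt_of_length_le (hu.lt_stdSuffix hu₂)
      (length_stdSuffix_lt hu.ne_nil).le v w).le

/-- When `(u, v)` is not a standard factorization, write `u = u₁ u₂` (standard) and use the Jacobi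
identity `⁅u, v⁆ = ⁅u₁, ⁅u₂, v⁆⁆ + ⁅⁅u₁, v⁆, u₂⁆`: the inner brackets are shorter, and the outer
ones have the same length and a smaller right word. -/
theorem lieSpannedBetween_of_not_std {u v : List α} (hu : IsLyndon u) (hu₂ : u.tail ≠ [])
    (hv : IsLyndon v) (hu₂v : stdSuffix u < v) (ih : LieSpannedBelow R (u.length + v.length) v) :
    LieSpannedBetween R u v := by
  rw [LieSpannedBetween, lyndonBracket_of_tail_ne_nil R hu₂, lie_lie, sub_eq_add_neg, lie_skew]
  exact add_mem (lie_stdPrefix_lie_mem_span hu hu₂ hv hu₂v ih)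
    (lie_lie_stdSuffix_mem_span hu hu₂ hv hu₂v ih)

theorem lieSpannedBetween_of_std {u v : List α} (hu : IsLyndon u) (hv : IsLyndon v) (huv : u < v)
    (hstd : u.tail = [] ∨ v ≤ stdSuffix u) : LieSpannedBetween R u v := by
  rw [LieSpannedBetween, ← lyndonBracket_append R hu.ne_nil hv hstd]
  exact subset_span
    ⟨u ++ v, ⟨hu.append hv huv, length_append, le_rfl, hv.append_left_lt hu.ne_nil huv⟩, rfl⟩

variable [Finite α]

/-- Induction on the total length, then on the right word, which is well founded since there are
finitely many words of bounded length. -/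
theorem lieSpannedBetween {u v : List α} (hu : IsLyndon u) (hv : IsLyndon v) (huv : u < v) :
    LieSpannedBetween R u v := by
  suffices ∀ N, ∀ v ∈ {w : List α | w.length ≤ N}, ∀ u, IsLyndon u → IsLyndon v → u < v →
      u.length + v.length = N → LieSpannedBetween R u v from
    this _ v (by simp) u hu hv huv rfl
  intro N
  induction N using Nat.strong_induction_on with
  | _ N ihN =>
  intro v hvN
  refine (List.finite_length_le α N).wellFoundedOn.induction (r := (· < ·)) hvN
    (P := fun v => ∀ u, IsLyndon u → IsLyndon v → u < v → u.length + v.length = N →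
      LieSpannedBetween R u v) ?_
  intro v hvN ihv u hu hv huv hN
  by_cases hstd : u.tail = [] ∨ v ≤ stdSuffix u
  · exact lieSpannedBetween_of_std hu hv huv hstd
  push Not at hstd
  refine lieSpannedBetween_of_not_std hu hstd.1 hv hstd.2 fun p q hp hq hpq hbelow => ?_
  rcases hbelow with hlt | ⟨hpqN, hqv⟩
  · exact ihN _ (hN ▸ hlt) q (by simp) p hp hq hpq rfl
  · exact ihv q (show q.length ≤ N by omega) hqv p hp hq hpq (hpqN.trans hN)

variable (R α)

theorem span_lyndonBracket_eq_top :
    span R (Set.range fun w : {w : List α // IsLyndon w} => lyndonBracket R w.1) = ⊤ := by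
  set S := span R (Set.range fun w : {w : List α // IsLyndon w} => lyndonBracket R w.1)
  have hpair : ∀ u v : List α, IsLyndon u → IsLyndon v → u < v →
      ⁅lyndonBracket R u, lyndonBracket R v⁆ ∈ S := fun u v hu hv huv =>
    span_mono (by rintro _ ⟨w, ⟨hw, -⟩, rfl⟩; exact ⟨⟨w, hw⟩, rfl⟩) (lieSpannedBetween hu hv huv)
  let K : LieSubalgebra R (FreeLieAlgebra R α) :=
    { S with
      lie_mem' := fun hx hy => lie_mem_of_mem_span (by
        rintro _ ⟨⟨u, hu⟩, rfl⟩ _ ⟨⟨v, hv⟩, rfl⟩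
        rcases lt_trichotomy u v with huv | rfl | hvu
        · exact hpair u v hu hv huv
        · simp
        · rw [← lie_skew]; exact neg_mem (hpair v u hv hu hvu)) hx hy }
  have hK : K = ⊤ := eq_top_of_of_mem fun i =>
    subset_span ⟨⟨[i], isLyndon_singleton i⟩, lyndonBracket_singleton R i⟩
  exact eq_top_iff.2 fun z _ => (hK ▸ LieSubalgebra.mem_top z : z ∈ K)

theorem toMonoidAlgebra_injective : Function.Injective (toMonoidAlgebra R (α := α)) :=
  LinearMap.injective_of_linearIndependent (f := (toMonoidAlgebra R).toLinearMap)
    (span_lyndonBracket_eq_top R α) (linearIndependent_toMonoidAlgebra_lyndonBracket R)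

end FreeLieAlgebra

namespace MonoidAlgebra

open Finset Polynomial

section Polynomial

variable {α : Type*} (a : α → ℤ)

noncomputable def toPolynomial : MonoidAlgebra ℤ (FreeMonoid α) →ₐ[ℤ] ℤ[X] :=
  lift ℤ ℤ[X] (FreeMonoid α) (FreeMonoid.lift fun i => C (a i) * X)

theorem toPolynomial_single (w : List α) (r : ℤ) :
    toPolynomial a (single (.ofList w) r) = C (r * (w.map a).prod) * X ^ w.length := by
  rw [toPolynomial, lift_single, FreeMonoid.lift_ofList, C_mul, mul_assoc, ← smul_eq_C_mul]
  congr 1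
  induction w with
  | nil => simp
  | cons i w ih => simp only [List.map_cons, List.prod_cons, ih, map_mul, List.length_cons]; ring

theorem coeff_toPolynomial (P : MonoidAlgebra ℤ (FreeMonoid α)) (k : ℕ) :
    (toPolynomial a P).coeff k =
      ∑ m ∈ P.coeff.support with m.toList.length = k, P.coeff m * (m.toList.map a).prod := by
  classical
  conv_lhs => rw [← sum_coeff_single P]
  rw [map_finsuppSum, Finsupp.sum, finsetSum_coeff, sum_filter]
  refine sum_congr rfl fun m _ => ?_
  rw [← FreeMonoid.ofList_toList m, toPolynomial_single, coeff_C_mul_X_pow]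
  simp only [FreeMonoid.toList_ofList, eq_comm]

end Polynomial

variable {α : Type*} [Fintype α] (a : α → ℤ)

noncomputable def sumSmulOf : MonoidAlgebra ℤ (FreeMonoid α) :=
  ∑ i, a i • single (FreeMonoid.of i) 1

theorem coeff_sumSmulOf_mul_cons (P : MonoidAlgebra ℤ (FreeMonoid α)) (i : α) (w : List α) :
    (sumSmulOf a * P).coeff (.ofList (i :: w)) = a i * P.coeff (.ofList w) := by
  classical
  rw [sumSmulOf, sum_mul, coeff_sum, Finsupp.finsetSum_apply, sum_eq_single i]
  · rw [smul_mul_assoc, coeff_smul_apply, FreeMonoid.ofList_cons, coeff_single_mul_mul, one_mul,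
      smul_eq_mul]
  · intro j _ hji
    rw [smul_mul_assoc, coeff_smul_apply, coeff_single_mul_of_forall_mul_ne, smul_zero]
    intro m hm
    exact hji (by simpa using congrArg (fun m => m.toList.head?) hm)
  · simp

theorem coeff_mul_sumSmulOf_append_singleton (P : MonoidAlgebra ℤ (FreeMonoid α)) (w : List α)
    (j : α) : (P * sumSmulOf a).coeff (.ofList (w ++ [j])) = P.coeff (.ofList w) * a j := by
  classical
  rw [sumSmulOf, mul_sum, coeff_sum, Finsupp.finsetSum_apply, sum_eq_single j]
  · rw [mul_smul_comm, coeff_smul_apply, FreeMonoid.ofList_append, FreeMonoid.ofList_singleton,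
      coeff_mul_single_mul, mul_one, smul_eq_mul, mul_comm]
  · intro i _ hij
    rw [mul_smul_comm, coeff_smul_apply, coeff_mul_single_of_forall_mul_ne, smul_zero]
    intro m hm
    exact hij (by simpa using congrArg (fun m => m.toList.getLast?) hm)
  · simp

theorem coeff_sumSmulOf_singleton (j : α) : (sumSmulOf a).coeff (.ofList [j]) = a j := by
  simpa using coeff_sumSmulOf_mul_cons a 1 j []

theorem coeff_sumSmulOf_of_length_ne_one {w : List α} (hw : w.length ≠ 1) :
    (sumSmulOf a).coeff (.ofList w) = 0 := by
  classical
  rw [sumSmulOf, coeff_sum, Finsupp.finsetSum_apply]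
  refine sum_eq_zero fun i _ => ?_
  rw [coeff_smul_apply, coeff_single, Finsupp.single_eq_of_ne, smul_zero]
  rintro rfl
  exact hw rfl

variable {a} {P : MonoidAlgebra ℤ (FreeMonoid α)}

theorem mul_coeff_append_singleton_of_commute (h : Commute (sumSmulOf a) P) (i j : α) (w : List α) :
    a i * P.coeff (.ofList (w ++ [j])) = a j * P.coeff (.ofList (i :: w)) := by
  rw [← coeff_sumSmulOf_mul_cons, h.eq, ← List.cons_append, coeff_mul_sumSmulOf_append_singleton,
    mul_comm]

/-- The exchange relation `a^t P(v) = a^v P(t)` is the case `s = []`; the extra word `s` lets the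
letters of `t` be moved across one at a time. -/
theorem prod_map_mul_coeff_of_commute (h : Commute (sumSmulOf a) P) :
    ∀ t s v : List α, t.length = v.length →
      (t.map a).prod * P.coeff (.ofList (s ++ v)) = (v.map a).prod * P.coeff (.ofList (t ++ s))
  | [], s, [], _ => by simp
  | i :: t, s, j :: v, hlen => by
    have ih := prod_map_mul_coeff_of_commute h t (s ++ [j]) v (by simpa using hlen)
    simp only [List.append_assoc, List.singleton_append] at ih
    calc ((i :: t).map a).prod * P.coeff (.ofList (s ++ j :: v))
        = (v.map a).prod * (a i * P.coeff (.ofList ((t ++ s) ++ [j]))) := by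
          rw [List.map_cons, List.prod_cons, mul_assoc, ih, List.append_assoc]; ring
      _ = ((j :: v).map a).prod * P.coeff (.ofList ((i :: t) ++ s)) := by
          rw [mul_coeff_append_singleton_of_commute h]
          simp only [List.map_cons, List.prod_cons, List.cons_append]
          ring

/-- The evaluation `toPolynomial a` sees the degree-`k` part of `P` as `∑ P(m) a^m`; by the exchange
relation, `a^w` times it is `P(w) ∑ P(m)²`, a sum of squares. -/
theorem coeff_eq_zero_of_commute (h : Commute (sumSmulOf a) P) (ha : a ≠ 0) {w : List α}
    (hw : (toPolynomial a P).coeff w.length = 0) : P.coeff (.ofList w) = 0 := by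
  classical
  obtain ⟨i, hi⟩ := Function.ne_iff.1 ha
  set F := P.coeff.support.filter fun m => m.toList.length = w.length
  have hsum : ∑ m ∈ F, P.coeff m * (m.toList.map a).prod = 0 := by rwa [coeff_toPolynomial] at hw
  by_cases haw : (w.map a).prod = 0
  · have := prod_map_mul_coeff_of_commute h (List.replicate w.length i) [] w (by simp)
    rw [List.map_replicate, List.prod_replicate, haw, zero_mul, List.nil_append] at this
    exact (mul_eq_zero.1 this).resolve_left (pow_ne_zero _ hi)
  have hsq : ∑ m ∈ F, P.coeff m ^ 2 = 0 := by
    refine mul_left_cancel₀ haw ?_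
    calc (w.map a).prod * ∑ m ∈ F, P.coeff m ^ 2
        = ∑ m ∈ F, P.coeff m * ((w.map a).prod * P.coeff m) := by
          rw [mul_sum]; exact sum_congr rfl fun m _ => by ring
      _ = ∑ m ∈ F, P.coeff m * ((m.toList.map a).prod * P.coeff (.ofList w)) := by
          refine sum_congr rfl fun m hm => ?_
          simpa using congrArg (P.coeff m * ·)
            (prod_map_mul_coeff_of_commute h m.toList [] w (mem_filter.1 hm).2).symm
      _ = P.coeff (.ofList w) * ∑ m ∈ F, P.coeff m * (m.toList.map a).prod := by
          rw [mul_sum]; exact sum_congr rfl fun m _ => by ring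
      _ = (w.map a).prod * 0 := by rw [hsum, mul_zero, mul_zero]
  by_contra hPw
  have hmem : FreeMonoid.ofList w ∈ F := mem_filter.2 ⟨Finsupp.mem_support_iff.2 hPw, rfl⟩
  exact hPw (pow_eq_zero_iff two_ne_zero |>.1
    ((sum_eq_zero_iff_of_nonneg fun m _ => sq_nonneg _).1 hsq _ hmem))

theorem exists_coeff_singleton_eq_mul_of_commute (hgcd : univ.gcd a = 1)
    (h : Commute (sumSmulOf a) P) : ∃ m : ℤ, ∀ j, P.coeff (.ofList [j]) = m * a j := by
  obtain ⟨g, hg⟩ := univ.gcd_eq_sum_mul a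
  refine ⟨∑ i, g i * P.coeff (.ofList [i]), fun j => ?_⟩
  calc P.coeff (.ofList [j]) = (∑ i, a i * g i) * P.coeff (.ofList [j]) := by
        rw [← hg, hgcd, one_mul]
    _ = ∑ i, g i * (a i * P.coeff (.ofList [j])) := by
        rw [sum_mul]; exact sum_congr rfl fun i _ => by ring
    _ = ∑ i, g i * (a j * P.coeff (.ofList [i])) := by
        refine sum_congr rfl fun i _ => ?_
        simpa using congrArg (g i * ·) (mul_coeff_append_singleton_of_commute h i j [])
    _ = (∑ i, g i * P.coeff (.ofList [i])) * a j := by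
        rw [sum_mul]; exact sum_congr rfl fun i _ => by ring

theorem exists_eq_smul_sumSmulOf_of_commute (hgcd : univ.gcd a = 1) (h : Commute (sumSmulOf a) P)
    (hP : ∀ k ≠ 1, (toPolynomial a P).coeff k = 0) : ∃ m : ℤ, P = m • sumSmulOf a := by
  have ha : a ≠ 0 := by
    rintro rfl
    exact zero_ne_one (hgcd ▸ (Finset.gcd_eq_zero_iff.2 fun _ _ => rfl).symm)
  obtain ⟨m, hm⟩ := exists_coeff_singleton_eq_mul_of_commute hgcd h
  refine ⟨m, ?_⟩
  ext x
  rw [← FreeMonoid.ofList_toList x, coeff_smul_apply, smul_eq_mul]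
  by_cases hx : x.toList.length = 1
  · obtain ⟨j, hj⟩ := List.length_eq_one_iff.1 hx
    rw [hj, hm, coeff_sumSmulOf_singleton]
  · rw [coeff_eq_zero_of_commute h ha (hP _ hx), coeff_sumSmulOf_of_length_ne_one a hx, mul_zero]

end MonoidAlgebra

namespace FreeLieAlgebra

open MonoidAlgebra Polynomial

variable {α : Type*}

theorem toMonoidAlgebra_sum_smul_of [Fintype α] (a : α → ℤ) :
    toMonoidAlgebra ℤ (∑ i, a i • of ℤ i) = sumSmulOf a := by
  simp [sumSmulOf]

/-- `toPolynomial a ∘ toMonoidAlgebra ℤ` is a Lie map into a commutative ring, so it kills brackets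
and its image is spanned by the images `a i • X` of the generators. -/
theorem coeff_toPolynomial_toMonoidAlgebra (a : α → ℤ) (z : FreeLieAlgebra ℤ α) {k : ℕ}
    (hk : k ≠ 1) : (toPolynomial a (toMonoidAlgebra ℤ z)).coeff k = 0 := by
  let K : LieSubalgebra ℤ (FreeLieAlgebra ℤ α) :=
    { carrier := {z | ∀ k ≠ 1, (toPolynomial a (toMonoidAlgebra ℤ z)).coeff k = 0}
      add_mem' := fun hx hy k hk => by simp [hx k hk, hy k hk]
      zero_mem' := fun k _ => by simp
      smul_mem' := fun c x hx k hk => by simp [hx k hk]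
      lie_mem' := fun _ _ k _ => by simp [Ring.lie_def, mul_comm] }
  have hK : K = ⊤ := eq_top_of_of_mem fun i k hk => by
    rw [toMonoidAlgebra_of, ← FreeMonoid.ofList_singleton, toPolynomial_single, coeff_C_mul_X_pow,
      List.length_singleton, if_neg hk]
  exact (hK ▸ LieSubalgebra.mem_top z : z ∈ K) k hk

theorem commute_toMonoidAlgebra_of_lie_smul_eq_zero {x y : FreeLieAlgebra ℤ α} {d : ℤ} (hd : d ≠ 0)
    (h : ⁅y, d • x⁆ = 0) : Commute (toMonoidAlgebra ℤ x) (toMonoidAlgebra ℤ y) := by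
  have := congrArg (toMonoidAlgebra ℤ) h
  rw [LieHom.map_lie, map_smul, lie_smul, map_zero, smul_eq_zero_iff_right hd, Ring.lie_def,
    sub_eq_zero] at this
  exact this.symm

end FreeLieAlgebra

theorem centralizer_in_free_lie_ring_general (n : ℕ) (a : Fin n → ℤ)
    (hgcd : Finset.univ.gcd a = 1) (d : ℤ) (hd : d ≠ 0)
    (y : FreeLieAlgebra ℤ (Fin n)) :
    ⁅y, d • ∑ i : Fin n, a i • FreeLieAlgebra.of ℤ i⁆ = 0 ↔
      ∃ m : ℤ, y = m • ∑ i : Fin n, a i • FreeLieAlgebra.of ℤ i := by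
  refine ⟨fun h => ?_, fun ⟨m, hm⟩ => by
    rw [hm, smul_lie, lie_smul, lie_self, smul_zero, smul_zero]⟩
  have hcomm := FreeLieAlgebra.commute_toMonoidAlgebra_of_lie_smul_eq_zero hd h
  rw [FreeLieAlgebra.toMonoidAlgebra_sum_smul_of] at hcomm
  obtain ⟨m, hm⟩ := MonoidAlgebra.exists_eq_smul_sumSmulOf_of_commute hgcd hcomm
    fun k hk => FreeLieAlgebra.coeff_toPolynomial_toMonoidAlgebra a y hk
  refine ⟨m, FreeLieAlgebra.toMonoidAlgebra_injective ℤ (Fin n) ?_⟩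
  rw [hm, map_smul, FreeLieAlgebra.toMonoidAlgebra_sum_smul_of]

/-- Lemma 3.6. In the free Lie ring `𝔏_n` on `X_1, …, X_n` (the free Lie
algebra over `ℤ` on `Fin n`), let `a_1, …, a_n` be integers with gcd `1`, `d ≠ 0` an integer,
and `X = d • (∑ a_i X_i)`.  Then the centralizer of `X` is exactly the set of integer
multiples of `∑ a_i X_i`. -/
theorem centralizer_in_free_lie_ring (n : ℕ) (hn : 1 ≤ n) (a : Fin n → ℤ)
    (hgcd : Finset.univ.gcd a = 1) (d : ℤ) (hd : d ≠ 0)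
    (y : FreeLieAlgebra ℤ (Fin n)) :
    ⁅y, d • ∑ i : Fin n, a i • FreeLieAlgebra.of ℤ i⁆ = 0 ↔
      ∃ m : ℤ, y = m • ∑ i : Fin n, a i • FreeLieAlgebra.of ℤ i :=
  centralizer_in_free_lie_ring_general n a hgcd d hd y
end

section
/- Let G be a group, G_* a strongly central filtration on G (subgroups G = G_1 ⊇ G_2 ⊇ ⋯ with [G_i, G_j] ⊆ G_{i+j}), and let H, K be subgroups of G such that K normalizes H. Then the following are equivalent: (i) for every i ≥ 1, every element g ∈ G_i which can be written as a product of an element of H and an element of K can be written as g = h·k with h ∈ G_i ∩ H and k ∈ G_i ∩ K; (ii) for every i ≥ 1, every h ∈ G_i ∩ H and every k ∈ G_i ∩ K with h⁻¹k ∈ G_{i+1}, there exists z ∈ G_i ∩ H ∩ K with h⁻¹z ∈ G_{i+1}. -/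
open scoped commutatorElement

/-!
Both conditions only concern two consecutive terms `G_{i+1} ≤ G_i` of the filtration.
If `h⁻¹k ∈ G_{i+1}` splits as `h'k'` inside `G_{i+1}`, then `z = hh' = kk'⁻¹` lies in `H ∩ K`
and `h⁻¹z = h' ∈ G_{i+1}`. Conversely, once `g = hk ∈ G_{i+1}` splits inside `G_i`, condition (ii)
for `h⁻¹` and `k` gives `z ∈ H ∩ K` with `hz ∈ G_{i+1}`, which moves the splitting down one step:
`g = (hz)(z⁻¹k)`. Induction on `i`
starts from `G_1 = G`.
-/

namespace Subgroup

variable {G : Type*} [Group G]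

def SplitsProduct (N H K : Subgroup G) : Prop :=
  ∀ g ∈ N, (∃ h ∈ H, ∃ k ∈ K, g = h * k) → ∃ h ∈ N ⊓ H, ∃ k ∈ N ⊓ K, g = h * k

def LiftsIntersection (A B H K : Subgroup G) : Prop :=
  ∀ h ∈ A ⊓ H, ∀ k ∈ A ⊓ K, h⁻¹ * k ∈ B → ∃ z ∈ A ⊓ H ⊓ K, h⁻¹ * z ∈ B

theorem splitsProduct_top (H K : Subgroup G) : SplitsProduct ⊤ H K := by
  rintro g - ⟨h, hh, k, hk, rfl⟩
  exact ⟨h, ⟨mem_top h, hh⟩, k, ⟨mem_top k, hk⟩, rfl⟩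

theorem liftsIntersection_of_splitsProduct {A B H K : Subgroup G} (hBA : B ≤ A)
    (hB : SplitsProduct B H K) : LiftsIntersection A B H K := by
  rintro h ⟨hA, hH⟩ k ⟨-, hK⟩ hhk
  obtain ⟨h', ⟨h'B, h'H⟩, k', ⟨-, k'K⟩, hsplit⟩ :=
    hB _ hhk ⟨h⁻¹, H.inv_mem hH, k, hK, rfl⟩
  have hz : h * h' = k * k'⁻¹ := by
    rw [eq_mul_inv_iff_mul_eq, mul_assoc, ← hsplit, mul_inv_cancel_left]
  refine ⟨h * h', ⟨⟨mul_mem hA (hBA h'B), mul_mem hH h'H⟩, ?_⟩, ?_⟩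
  · rw [hz]
    exact mul_mem hK (K.inv_mem k'K)
  · rwa [inv_mul_cancel_left]

theorem splitsProduct_of_liftsIntersection {A B H K : Subgroup G} (hBA : B ≤ A)
    (hA : SplitsProduct A H K) (hAB : LiftsIntersection A B H K) : SplitsProduct B H K := by
  intro g hgB hg
  obtain ⟨h, ⟨hA', hH⟩, k, hk, rfl⟩ := hA g (hBA hgB) hg
  obtain ⟨z, ⟨⟨-, zH⟩, zK⟩, hzB⟩ :=
    hAB h⁻¹ ⟨A.inv_mem hA', H.inv_mem hH⟩ k hk (by rwa [inv_inv])
  rw [inv_inv] at hzB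
  have hk' : z⁻¹ * k = (h * z)⁻¹ * (h * k) := by group
  refine ⟨h * z, ⟨hzB, mul_mem hH zH⟩, z⁻¹ * k, ⟨?_, mul_mem (K.inv_mem zK) hk.2⟩, by group⟩
  rw [hk']
  exact mul_mem (B.inv_mem hzB) hgB

end Subgroup

open Subgroup in
theorem decomposition_of_induced_filtration_general {G : Type*} [Group G] (Gf : ℕ → Subgroup G)
    (h1 : Gf 1 = ⊤)
    (hdesc : ∀ i, 1 ≤ i → Gf (i + 1) ≤ Gf i)
    (H K : Subgroup G) :
    (∀ i, 1 ≤ i → ∀ g ∈ Gf i, (∃ h ∈ H, ∃ k ∈ K, g = h * k) →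
        ∃ h ∈ Gf i ⊓ H, ∃ k ∈ Gf i ⊓ K, g = h * k) ↔
      (∀ i, 1 ≤ i → ∀ h ∈ Gf i ⊓ H, ∀ k ∈ Gf i ⊓ K, h⁻¹ * k ∈ Gf (i + 1) →
        ∃ z ∈ Gf i ⊓ H ⊓ K, h⁻¹ * z ∈ Gf (i + 1)) := by
  refine ⟨fun hsplit i hi =>
    liftsIntersection_of_splitsProduct (hdesc i hi) (hsplit (i + 1) (by omega)), fun hlift i hi => ?_⟩
  induction i, hi using Nat.le_induction with
  | base => exact h1 ▸ splitsProduct_top H K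
  | succ i hi ih => exact splitsProduct_of_liftsIntersection (hdesc i hi) ih (hlift i hi)

/-- Proposition 4.2. Let `Gf` be a strongly central filtration on `G` and
`H, K ≤ G` with `K` normalizing `H`.  Then `G_* ∩ (HK) = (G_* ∩ H)(G_* ∩ K)` (condition (i))
if and only if, inside the associated graded Lie ring,
`Lie(G_* ∩ H) ∩ Lie(G_* ∩ K) = Lie(G_* ∩ (H ∩ K))` (condition (ii)). -/
theorem decomposition_of_induced_filtration {G : Type*} [Group G] (Gf : ℕ → Subgroup G)
    (h1 : Gf 1 = ⊤)
    (hdesc : ∀ i, 1 ≤ i → Gf (i + 1) ≤ Gf i)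
    (hsc : ∀ i j, 1 ≤ i → 1 ≤ j → ∀ g ∈ Gf i, ∀ x ∈ Gf j, ⁅g, x⁆ ∈ Gf (i + j))
    (H K : Subgroup G) (hnorm : ∀ k ∈ K, ∀ h ∈ H, k * h * k⁻¹ ∈ H) :
    (∀ i, 1 ≤ i → ∀ g ∈ Gf i, (∃ h ∈ H, ∃ k ∈ K, g = h * k) →
        ∃ h ∈ Gf i ⊓ H, ∃ k ∈ Gf i ⊓ K, g = h * k) ↔
      (∀ i, 1 ≤ i → ∀ h ∈ Gf i ⊓ H, ∀ k ∈ Gf i ⊓ K, h⁻¹ * k ∈ Gf (i + 1) →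
        ∃ z ∈ Gf i ⊓ H ⊓ K, h⁻¹ * z ∈ Gf (i + 1)) :=
  decomposition_of_induced_filtration_general Gf h1 hdesc H K
end

section
/- Let G be a group, G_* a strongly central filtration on G (subgroups G = G_1 ⊇ G_2 ⊇ ⋯ with [G_i, G_j] ⊆ G_{i+j}), and let H, K be subgroups of G with [K,H] ⊆ [H,H] (commutator subgroups). Suppose: (a) for every i ≥ 1, every h ∈ G_i ∩ H and every k ∈ G_i ∩ K with h⁻¹k ∈ G_{i+1}, there exists z ∈ G_i ∩ H ∩ K with h⁻¹z ∈ G_{i+1}; (b) for every i ≥ 1, G_i ∩ K = Γ_i(K) and G_i ∩ H = Γ_i(H), where Γ_i of a subgroup is its lower central series viewed inside G. Then for every i ≥ 1, G_i ∩ (HK) = Γ_i(HK), the i-th lower central series term of the subgroup HK = H∨K. -/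
/-- `relLCS S S (i - 1)` is the term `Γ_i(S)` of the lower central series of `S`, computed
inside `G`. -/
def relLCS {G : Type*} [Group G] (A B : Subgroup G) : ℕ → Subgroup G
  | 0 => B
  | k + 1 => ⁅A, relLCS A B k⁆

open scoped commutatorElement

/-!
Since `[K, H] ≤ [H, H] ≤ H`, `K` normalizes `H`, so every element of `H ⊔ K` is a product
`h * k`. If such a product lies in `G_{i+1}` while `h ∈ G_i ∩ H` and `k ∈ G_i ∩ K`, then `h⁻¹`
and `k` agree modulo `G_{i+1}`, so hypothesis (a) supplies `z ∈ G_i ∩ H ∩ K` with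
`h * z ∈ G_{i+1}`; rewriting `h * k` as `(h * z) * (z⁻¹ * k)` pushes both factors one step down
the filtration. Iterating, every `x ∈ G_{i+1} ∩ HK` is a product of elements of
`G_{i+1} ∩ H = Γ_{i+1}(H)` and `G_{i+1} ∩ K = Γ_{i+1}(K)`, hence lies in `Γ_{i+1}(HK)`. The
reverse inclusion holds for any strongly central filtration.
-/

section

open Subgroup

variable {G : Type*} [Group G]

lemma relLCS_mono {A A' B B' : Subgroup G} (hA : A ≤ A') (hB : B ≤ B') (n : ℕ) :
    relLCS A B n ≤ relLCS A' B' n := by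
  induction n with
  | zero => exact hB
  | succ n ih => exact commutator_mono hA ih

lemma relLCS_le_left {A B : Subgroup G} (hBA : B ≤ A) (n : ℕ) : relLCS A B n ≤ A := by
  induction n with
  | zero => exact hBA
  | succ n ih => exact (commutator_mono le_rfl ih).trans A.commutator_le_self

lemma relLCS_le_filtration {Gf : ℕ → Subgroup G} (h1 : Gf 1 = ⊤)
    (hsc : ∀ i j, 1 ≤ i → 1 ≤ j → ∀ g ∈ Gf i, ∀ x ∈ Gf j, ⁅g, x⁆ ∈ Gf (i + j))
    (A B : Subgroup G) (n : ℕ) : relLCS A B n ≤ Gf (n + 1) := by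
  induction n with
  | zero => simp [relLCS, h1]
  | succ n ih =>
    refine commutator_le.mpr fun g _ x hx => ?_
    have hg : g ∈ Gf 1 := h1 ▸ mem_top g
    simpa [add_comm] using hsc 1 (n + 1) le_rfl (by omega) g hg x (ih hx)

lemma exists_mul_eq_of_le_normalizer {H K : Subgroup G} (hK : K ≤ normalizer (H : Set G))
    {x : G} (hx : x ∈ H ⊔ K) : ∃ h ∈ H, ∃ k ∈ K, h * k = x := by
  rwa [← SetLike.mem_coe, coe_mul_of_right_le_normalizer_left H K hK] at hx

lemma exists_mul_eq_succ {Gf : ℕ → Subgroup G} {H K : Subgroup G} {j : ℕ}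
    (ha : ∀ h ∈ Gf j ⊓ H, ∀ k ∈ Gf j ⊓ K, h⁻¹ * k ∈ Gf (j + 1) →
      ∃ z ∈ Gf j ⊓ H ⊓ K, h⁻¹ * z ∈ Gf (j + 1))
    {h k : G} (hh : h ∈ Gf j ⊓ H) (hk : k ∈ Gf j ⊓ K) (hhk : h * k ∈ Gf (j + 1)) :
    ∃ h' ∈ Gf (j + 1) ⊓ H, ∃ k' ∈ Gf (j + 1) ⊓ K, h' * k' = h * k := by
  obtain ⟨z, ⟨⟨-, hzH⟩, hzK⟩, hhz⟩ :=
    ha h⁻¹ ((Gf j ⊓ H).inv_mem hh) k hk (by rwa [inv_inv])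
  rw [inv_inv] at hhz
  have hzk : z⁻¹ * k ∈ Gf (j + 1) := by
    rw [show z⁻¹ * k = (h * z)⁻¹ * (h * k) by group]
    exact (Gf (j + 1)).mul_mem ((Gf (j + 1)).inv_mem hhz) hhk
  exact ⟨h * z, ⟨hhz, H.mul_mem hh.2 hzH⟩, z⁻¹ * k, ⟨hzk, K.mul_mem (K.inv_mem hzK) hk.2⟩,
    by group⟩

lemma exists_mul_eq_of_mem_filtration {Gf : ℕ → Subgroup G} (h1 : Gf 1 = ⊤)
    (hdesc : ∀ i, 1 ≤ i → Gf (i + 1) ≤ Gf i) {H K : Subgroup G}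
    (hK : K ≤ normalizer (H : Set G))
    (ha : ∀ i, 1 ≤ i → ∀ h ∈ Gf i ⊓ H, ∀ k ∈ Gf i ⊓ K, h⁻¹ * k ∈ Gf (i + 1) →
      ∃ z ∈ Gf i ⊓ H ⊓ K, h⁻¹ * z ∈ Gf (i + 1))
    (n : ℕ) {x : G} (hx : x ∈ Gf (n + 1) ⊓ (H ⊔ K)) :
    ∃ h ∈ Gf (n + 1) ⊓ H, ∃ k ∈ Gf (n + 1) ⊓ K, h * k = x := by
  induction n generalizing x with
  | zero =>
    obtain ⟨h, hh, k, hk, rfl⟩ := exists_mul_eq_of_le_normalizer hK hx.2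
    exact ⟨h, ⟨h1 ▸ mem_top h, hh⟩, k, ⟨h1 ▸ mem_top k, hk⟩, rfl⟩
  | succ n ih =>
    obtain ⟨h, hh, k, hk, rfl⟩ := ih ⟨hdesc (n + 1) (by omega) hx.1, hx.2⟩
    exact exists_mul_eq_succ (ha (n + 1) (by omega)) hh hk hx.1

end

/-- Theorem 4.3, the key theorem. Let `Gf` be a strongly central
filtration on `G`, and `H, K ≤ G` with `[K,H] ⊆ [H,H]`.  Assume
(a) `Lie(G_* ∩ H) ∩ Lie(G_* ∩ K) = Lie(G_* ∩ (H ∩ K))`, and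
(b) `G_i ∩ K = Γ_i(K)` and `G_i ∩ H = Γ_i(H)` for all `i ≥ 1`.
Then `G_i ∩ (HK) = Γ_i(HK)` for all `i ≥ 1` (here `HK = H ⊔ K`, and `Γ_i(S)` is
`relLCS S S (i-1)`). -/
theorem key_theorem_products {G : Type*} [Group G] (Gf : ℕ → Subgroup G)
    (h1 : Gf 1 = ⊤)
    (hdesc : ∀ i, 1 ≤ i → Gf (i + 1) ≤ Gf i)
    (hsc : ∀ i j, 1 ≤ i → 1 ≤ j → ∀ g ∈ Gf i, ∀ x ∈ Gf j, ⁅g, x⁆ ∈ Gf (i + j))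
    (H K : Subgroup G) (hKH : ⁅K, H⁆ ≤ ⁅H, H⁆)
    (ha : ∀ i, 1 ≤ i → ∀ h ∈ Gf i ⊓ H, ∀ k ∈ Gf i ⊓ K, h⁻¹ * k ∈ Gf (i + 1) →
      ∃ z ∈ Gf i ⊓ H ⊓ K, h⁻¹ * z ∈ Gf (i + 1))
    (hbK : ∀ i : ℕ, Gf (i + 1) ⊓ K = relLCS K K i)
    (hbH : ∀ i : ℕ, Gf (i + 1) ⊓ H = relLCS H H i) :
    ∀ i : ℕ, Gf (i + 1) ⊓ (H ⊔ K) = relLCS (H ⊔ K) (H ⊔ K) i := by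
  have hK : K ≤ Subgroup.normalizer (H : Set G) :=
    Subgroup.le_normalizer_iff_commutator_le_right.mpr (hKH.trans H.commutator_le_self)
  intro i
  refine le_antisymm (fun x hx => ?_)
    (le_inf (relLCS_le_filtration h1 hsc _ _ i) (relLCS_le_left le_rfl i))
  obtain ⟨h, hh, k, hk, rfl⟩ := exists_mul_eq_of_mem_filtration h1 hdesc hK ha i hx
  rw [hbH] at hh
  rw [hbK] at hk
  exact mul_mem (relLCS_mono le_sup_left le_sup_left i hh)
    (relLCS_mono le_sup_right le_sup_right i hk)
end
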